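/- arXiv:1307.1919 — 2 statements merged into one kernel-verified Lean document; each statement's English description precedes it below -/
import Mathlib

section
/- Let V_c ≥ (√3/4)·(2π)² and define a(x) = 4x² + 16 and t(x) = x + 4V_c²/x. Then for all x ∈ (0, 4V_c/√3], min(a(x), t(x)) ≤ 8·V_c^{4/3} + 16. -/
open Real

theorem stmt10 (Vc : ℝ) (hVc : Real.sqrt 3 / 4 * (2 * Real.pi) ^ 2 ≤ Vc) :
    ∀ x : ℝ, 0 < x → x ≤ 4 * Vc / Real.sqrt 3 →
      min (4 * x ^ 2 + 16) (x + 4 * Vc ^ 2 / x) ≤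
        8 * Vc ^ ((4 : ℝ) / 3) + 16 := by
  have hpi : 3 ≤ Real.pi := Real.pi_gt_three.le
  have hs3 : 1 ≤ Real.sqrt 3 := by
    rw [show (1:ℝ) = Real.sqrt 1 by simp]
    exact Real.sqrt_le_sqrt (by norm_num)
  have hVc1 : (1:ℝ) ≤ Vc := by nlinarith [Real.sq_sqrt (by norm_num : (3:ℝ) ≥ 0)]
  have hVc0 : (0:ℝ) < Vc := by linarith
  set c : ℝ := Real.sqrt 2 * Vc ^ ((2:ℝ)/3) with hc
  have hrp : (0:ℝ) < Vc ^ ((2:ℝ)/3) := Real.rpow_pos_of_pos hVc0 _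
  have hs2 : (0:ℝ) < Real.sqrt 2 := by positivity
  have hc0 : 0 < c := by positivity
  have hcsq : c ^ 2 = 2 * Vc ^ ((4:ℝ)/3) := by
    rw [hc, mul_pow, Real.sq_sqrt (by norm_num : (2:ℝ) ≥ 0),
      ← Real.rpow_natCast (Vc ^ ((2:ℝ)/3)) 2, ← Real.rpow_mul hVc0.le]
    norm_num
  have hVc43 : Vc ≤ Vc ^ ((4:ℝ)/3) := by
    nth_rewrite 1 [show Vc = Vc ^ (1:ℝ) by simp]
    exact Real.rpow_le_rpow_of_exponent_le hVc1 (by norm_num)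
  intro x hx hxle
  rcases le_or_gt x c with h | h
  · refine (min_le_left _ _).trans ?_
    have : x ^ 2 ≤ c ^ 2 := by nlinarith
    nlinarith
  · refine (min_le_right _ _).trans ?_
    have h1 : 4 * Vc ^ 2 / x ≤ 4 * Vc ^ 2 / c :=
      div_le_div_of_nonneg_left (by positivity) hc0 h.le
    have h2 : 4 * Vc ^ 2 / c = 2 * Real.sqrt 2 * Vc ^ ((4:ℝ)/3) := by
      rw [div_eq_iff hc0.ne', hc]
      have : Vc ^ ((4:ℝ)/3) * Vc ^ ((2:ℝ)/3) = Vc ^ 2 := by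
        rw [← Real.rpow_add hVc0, ← Real.rpow_natCast Vc 2]; norm_num
      nlinarith [Real.sq_sqrt (by norm_num : (2:ℝ) ≥ 0)]
    have hx4 : x ≤ 4 * Vc := by
      calc x ≤ 4 * Vc / Real.sqrt 3 := hxle
        _ ≤ 4 * Vc / 1 := by
          apply div_le_div_of_nonneg_left (by positivity) one_pos hs3
        _ = 4 * Vc := by ring
    have hs2le : Real.sqrt 2 ≤ 2 := by
      nlinarith [Real.sq_sqrt (show (0:ℝ) ≤ 2 by norm_num), Real.sqrt_nonneg 2]
    have : x + 4 * Vc ^ 2 / x ≤ 4 * Vc + 2 * Real.sqrt 2 * Vc ^ ((4:ℝ)/3) := by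
      rw [← h2]; linarith
    nlinarith
end

section
/- Let π = 3 + √-2 ∈ ℤ[√-2] and n ≥ 1. If a, b, c, d ∈ ℤ[√-2] satisfy (aπⁿ + 1)(dπⁿ + 1) - bc·π^{2n} = 1, then πⁿ divides a + d in ℤ[√-2]; consequently, if a + d ≠ 0 then |(a + d)πⁿ + 2| ≥ 11ⁿ - 2. -/
/-!
Since `πⁿ ∣ a + d` and `a + d ≠ 0`, the norm of `(a + d)πⁿ` is at least `N(π)^{2n} = 11^{2n}`.
As `‖toC z‖ = √(N z)`, this gives `‖toC ((a + d)πⁿ)‖ ≥ 11ⁿ`, and the triangle inequality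
accounts for the `+ 2`.
-/

open Real Complex

/-- The embedding of `ℤ[√-2]` into `ℂ` via `√-2 ↦ i√2`. -/
noncomputable def toC (z : ℤ√(-2)) : ℂ :=
  (z.re : ℂ) + (z.im : ℂ) * (Complex.I * Real.sqrt 2)

theorem mul_self_I_mul_sqrt_two : (I * √2) * (I * √2) = ((-2 : ℤ) : ℂ) := by
  have h : ((√2 : ℝ) : ℂ) * (√2 : ℝ) = 2 := by exact_mod_cast Real.mul_self_sqrt zero_le_two
  linear_combination (I * I) * h + 2 * I_mul_I

noncomputable def toCRingHom : ℤ√(-2) →+* ℂ := Zsqrtd.lift ⟨I * √2, mul_self_I_mul_sqrt_two⟩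

theorem coe_toCRingHom : ⇑toCRingHom = toC := rfl

theorem norm_toC (z : ℤ√(-2)) : ‖toC z‖ = √(z.norm : ℝ) := by
  have h : toC z = (z.re : ℝ) + ((z.im * √2 : ℝ) : ℂ) * I := by
    unfold toC; push_cast; ring
  rw [h, norm_add_mul_I, Zsqrtd.norm_def]
  congr 1
  push_cast
  linear_combination (z.im : ℝ) ^ 2 * Real.sq_sqrt zero_le_two

namespace Zsqrtd

variable {d : ℤ} [Fact (d < 0)]

instance : NoZeroDivisors (ℤ√d) where
  eq_zero_or_eq_zero_of_mul_eq_zero {x y} hxy := by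
    have h := congrArg norm hxy
    rwa [norm_mul, norm_zero, mul_eq_zero, norm_eq_zero_iff Fact.out,
      norm_eq_zero_iff Fact.out] at h

instance : IsDomain (ℤ√d) := NoZeroDivisors.to_isDomain _

theorem norm_le_norm_of_dvd {q z : ℤ√d} (hqz : q ∣ z) (hz : z ≠ 0) : q.norm ≤ z.norm := by
  have hpos : 0 < z.norm :=
    (norm_nonneg (Fact.out : d < 0).le z).lt_of_ne' ((norm_eq_zero_iff Fact.out z).not.mpr hz)
  exact Int.le_of_dvd hpos (map_dvd normMonoidHom hqz)

end Zsqrtd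

instance : Fact ((-2 : ℤ) < 0) := ⟨by norm_num⟩

/-- With `M = [[a, b], [c, d]]`, the hypothesis says `det (1 + q M) = 1`; since
`det (1 + q M) = 1 + q tr M + q² det M`, this forces `q ∣ tr M`. -/
theorem dvd_add_of_det_one_add_mul_eq_one {R : Type*} [CommRing R] [IsDomain R]
    {q a b c d : R} (hq : q ≠ 0) (h : (a * q + 1) * (d * q + 1) - b * c * q ^ 2 = 1) :
    q ∣ a + d := by
  refine ⟨b * c - a * d, mul_left_cancel₀ hq ?_⟩
  linear_combination h

theorem stmt18_general (n : ℕ) (a b c d : ℤ√(-2))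
    (p : ℤ√(-2)) (hp : p = ⟨3, 1⟩)
    (h : (a * p ^ n + 1) * (d * p ^ n + 1) - b * c * p ^ (2 * n) = 1) :
    p ^ n ∣ (a + d) ∧
    (a + d ≠ 0 →
      (11 : ℝ) ^ n - 2 ≤ ‖toC ((a + d) * p ^ n + 2)‖) := by
  have hnorm_p : p.norm = 11 := by subst hp; rfl
  have hpn : p ^ n ≠ 0 := pow_ne_zero n (by rintro rfl; simp at hnorm_p)
  have hdvd : p ^ n ∣ a + d := dvd_add_of_det_one_add_mul_eq_one hpn (by rwa [← pow_mul'])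
  refine ⟨hdvd, fun had => ?_⟩
  have hnorm_pn : (p ^ n).norm = 11 ^ n := by
    rw [← hnorm_p]; exact map_pow Zsqrtd.normMonoidHom p n
  have hnorm : (11 : ℤ) ^ n * 11 ^ n ≤ ((a + d) * p ^ n).norm := by
    rw [Zsqrtd.norm_mul, hnorm_pn, ← hnorm_pn]
    exact mul_le_mul_of_nonneg_right (Zsqrtd.norm_le_norm_of_dvd hdvd had)
      (Zsqrtd.norm_nonneg (by norm_num) _)
  have hlow : (11 : ℝ) ^ n ≤ ‖toC ((a + d) * p ^ n)‖ := by
    rw [norm_toC, Real.le_sqrt' (by positivity), sq]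
    exact_mod_cast hnorm
  calc (11 : ℝ) ^ n - 2 ≤ ‖toC ((a + d) * p ^ n)‖ - ‖(2 : ℂ)‖ := by
        rw [Complex.norm_ofNat]; linarith
    _ ≤ ‖toC ((a + d) * p ^ n + 2)‖ := by
      rw [← coe_toCRingHom, map_add, map_ofNat]
      exact norm_sub_le_norm_add _ _

theorem stmt18 (n : ℕ) (hn : 1 ≤ n) (a b c d : ℤ√(-2))
    (p : ℤ√(-2)) (hp : p = ⟨3, 1⟩)
    (h : (a * p ^ n + 1) * (d * p ^ n + 1) - b * c * p ^ (2 * n) = 1) :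
    p ^ n ∣ (a + d) ∧
    (a + d ≠ 0 →
      (11 : ℝ) ^ n - 2 ≤ ‖toC ((a + d) * p ^ n + 2)‖) :=
  stmt18_general n a b c d p hp h
end
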